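/- arXiv:2111.05902 — 6 statements merged into one kernel-verified Lean document; each statement's English description precedes it below -/
import Mathlib

section
/- Let b > 0, d > 0, Ω > 0 and α, β ≥ 0. A function p : ℕ³ → ℝ with p ≥ 0 and ∑_{(i,j,k)∈ℕ³} p(i,j,k) = 1 satisfies the GV stationary master equation if and only if p is the point mass at (0,0,0), i.e. p(0,0,0) = 1 and p(i,j,k) = 0 for all (i,j,k) ≠ (0,0,0). (Proposition 3.1: the unique stationary distribution of the general-variance stochastic May–Leonard model is total extinction.) -/
/-- Extension of `p : ℕ³ → ℝ` to `ℤ³`, vanishing whenever some coordinate is negative. -/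
noncomputable def pext (p : ℕ → ℕ → ℕ → ℝ) (i j k : ℤ) : ℝ :=
  if 0 ≤ i ∧ 0 ≤ j ∧ 0 ≤ k then p i.toNat j.toNat k.toNat else 0

/-- The stationary master equation of the general-variance (GV) stochastic May–Leonard model. -/
noncomputable def GVME (b d Ω α β : ℝ) (p : ℕ → ℕ → ℕ → ℝ) : Prop :=
  ∀ i j k : ℕ,
    b * (((i : ℝ) - 1) * pext p ((i : ℤ) - 1) j k
        + ((j : ℝ) - 1) * pext p i ((j : ℤ) - 1) k
        + ((k : ℝ) - 1) * pext p i j ((k : ℤ) - 1))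
    + d * (((i : ℝ) + 1) * pext p ((i : ℤ) + 1) j k
        + ((j : ℝ) + 1) * pext p i ((j : ℤ) + 1) k
        + ((k : ℝ) + 1) * pext p i j ((k : ℤ) + 1))
    + (1 / Ω) * (((i : ℝ) + 1) * ((i : ℝ) + α * (j : ℝ) + β * (k : ℝ)) * pext p ((i : ℤ) + 1) j k
        + ((j : ℝ) + 1) * (β * (i : ℝ) + (j : ℝ) + α * (k : ℝ)) * pext p i ((j : ℤ) + 1) k
        + ((k : ℝ) + 1) * (α * (i : ℝ) + β * (j : ℝ) + (k : ℝ)) * pext p i j ((k : ℤ) + 1))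
    - (b + d) * ((i : ℝ) + (j : ℝ) + (k : ℝ)) * pext p i j k
    - (1 / Ω) * ((i : ℝ) * ((i : ℝ) - 1 + α * (j : ℝ) + β * (k : ℝ))
        + (j : ℝ) * (β * (i : ℝ) + (j : ℝ) - 1 + α * (k : ℝ))
        + (k : ℝ) * (α * (i : ℝ) + β * (j : ℝ) + (k : ℝ) - 1)) * pext p i j k
    = 0

lemma pext_cast (p : ℕ → ℕ → ℕ → ℝ) (i j k : ℕ) :
    pext p (i : ℤ) (j : ℤ) (k : ℤ) = p i j k := by
  simp [pext]

lemma pext_succ1 (p : ℕ → ℕ → ℕ → ℝ) (i j k : ℕ) :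
    pext p ((i : ℤ) + 1) (j : ℤ) (k : ℤ) = p (i + 1) j k := by
  rw [show ((i : ℤ) + 1) = ((i + 1 : ℕ) : ℤ) by push_cast; ring, pext_cast]

lemma pext_succ2 (p : ℕ → ℕ → ℕ → ℝ) (i j k : ℕ) :
    pext p (i : ℤ) ((j : ℤ) + 1) (k : ℤ) = p i (j + 1) k := by
  rw [show ((j : ℤ) + 1) = ((j + 1 : ℕ) : ℤ) by push_cast; ring, pext_cast]

lemma pext_succ3 (p : ℕ → ℕ → ℕ → ℝ) (i j k : ℕ) :
    pext p (i : ℤ) (j : ℤ) ((k : ℤ) + 1) = p i j (k + 1) := by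
  rw [show ((k : ℤ) + 1) = ((k + 1 : ℕ) : ℤ) by push_cast; ring, pext_cast]

lemma bterm1 (p : ℕ → ℕ → ℕ → ℝ) (i j k : ℕ) (h : 2 ≤ i → p (i - 1) j k = 0) :
    ((i : ℝ) - 1) * pext p ((i : ℤ) - 1) (j : ℤ) (k : ℤ) = 0 := by
  rcases Nat.lt_or_ge i 2 with hi | hi
  · interval_cases i
    · norm_num [pext]
    · norm_num
  · rw [show ((i : ℤ) - 1) = ((i - 1 : ℕ) : ℤ) by omega, pext_cast, h hi, mul_zero]

lemma bterm2 (p : ℕ → ℕ → ℕ → ℝ) (i j k : ℕ) (h : 2 ≤ j → p i (j - 1) k = 0) :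
    ((j : ℝ) - 1) * pext p (i : ℤ) ((j : ℤ) - 1) (k : ℤ) = 0 := by
  rcases Nat.lt_or_ge j 2 with hj | hj
  · interval_cases j
    · norm_num [pext]
    · norm_num
  · rw [show ((j : ℤ) - 1) = ((j - 1 : ℕ) : ℤ) by omega, pext_cast, h hj, mul_zero]

lemma bterm3 (p : ℕ → ℕ → ℕ → ℝ) (i j k : ℕ) (h : 2 ≤ k → p i j (k - 1) = 0) :
    ((k : ℝ) - 1) * pext p (i : ℤ) (j : ℤ) ((k : ℤ) - 1) = 0 := by
  rcases Nat.lt_or_ge k 2 with hk | hk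
  · interval_cases k
    · norm_num [pext]
    · norm_num
  · rw [show ((k : ℤ) - 1) = ((k - 1 : ℕ) : ℤ) by omega, pext_cast, h hk, mul_zero]

lemma negterm1 (b d : ℝ) (p : ℕ → ℕ → ℕ → ℝ) (i j k : ℕ)
    (h : 1 ≤ i + j + k → p i j k = 0) :
    (b + d) * ((i : ℝ) + (j : ℝ) + (k : ℝ)) * pext p (i : ℤ) (j : ℤ) (k : ℤ) = 0 := by
  by_cases h0 : i + j + k = 0
  · obtain ⟨rfl, rfl, rfl⟩ : i = 0 ∧ j = 0 ∧ k = 0 := by omega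
    norm_num
  · rw [pext_cast, h (by omega), mul_zero]

lemma negterm2 (Ω α β : ℝ) (p : ℕ → ℕ → ℕ → ℝ) (i j k : ℕ)
    (h : 1 ≤ i + j + k → p i j k = 0) :
    (1 / Ω) * ((i : ℝ) * ((i : ℝ) - 1 + α * (j : ℝ) + β * (k : ℝ))
        + (j : ℝ) * (β * (i : ℝ) + (j : ℝ) - 1 + α * (k : ℝ))
        + (k : ℝ) * (α * (i : ℝ) + β * (j : ℝ) + (k : ℝ) - 1)) * pext p (i : ℤ) (j : ℤ) (k : ℤ)
      = 0 := by
  by_cases h0 : i + j + k = 0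
  · obtain ⟨rfl, rfl, rfl⟩ : i = 0 ∧ j = 0 ∧ k = 0 := by omega
    norm_num
  · rw [pext_cast, h (by omega), mul_zero]

lemma gv_step (b d Ω α β : ℝ) (hd : 0 < d) (hΩ : 0 < Ω) (hα : 0 ≤ α) (hβ : 0 ≤ β)
    (p : ℕ → ℕ → ℕ → ℝ) (hnn : ∀ i j k : ℕ, 0 ≤ p i j k)
    (hME : GVME b d Ω α β p) (i j k : ℕ)
    (hz : ∀ a b' c : ℕ, 1 ≤ a + b' + c → a + b' + c ≤ i + j + k → p a b' c = 0) :
    p (i + 1) j k = 0 ∧ p i (j + 1) k = 0 ∧ p i j (k + 1) = 0 := by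
  have h := hME i j k
  rw [bterm1 p i j k (fun h2 => hz _ _ _ (by omega) (by omega)),
      bterm2 p i j k (fun h2 => hz _ _ _ (by omega) (by omega)),
      bterm3 p i j k (fun h2 => hz _ _ _ (by omega) (by omega)),
      negterm1 b d p i j k (fun h1 => hz i j k h1 le_rfl),
      negterm2 Ω α β p i j k (fun h1 => hz i j k h1 le_rfl),
      pext_succ1, pext_succ2, pext_succ3] at h
  have q1 := hnn (i + 1) j k
  have q2 := hnn i (j + 1) k
  have q3 := hnn i j (k + 1)
  have h2 : d * (((i : ℝ) + 1) * p (i + 1) j k) + d * (((j : ℝ) + 1) * p i (j + 1) k)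
      + d * (((k : ℝ) + 1) * p i j (k + 1))
      + (1 / Ω) * (((i : ℝ) + 1) * ((i : ℝ) + α * (j : ℝ) + β * (k : ℝ)) * p (i + 1) j k)
      + (1 / Ω) * (((j : ℝ) + 1) * (β * (i : ℝ) + (j : ℝ) + α * (k : ℝ)) * p i (j + 1) k)
      + (1 / Ω) * (((k : ℝ) + 1) * (α * (i : ℝ) + β * (j : ℝ) + (k : ℝ)) * p i j (k + 1))
      = 0 := by linear_combination h
  have n1 : 0 ≤ d * (((i : ℝ) + 1) * p (i + 1) j k) := by positivity
  have n2 : 0 ≤ d * (((j : ℝ) + 1) * p i (j + 1) k) := by positivity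
  have n3 : 0 ≤ d * (((k : ℝ) + 1) * p i j (k + 1)) := by positivity
  have n4 : 0 ≤ (1 / Ω) * (((i : ℝ) + 1) * ((i : ℝ) + α * (j : ℝ) + β * (k : ℝ))
      * p (i + 1) j k) := by positivity
  have n5 : 0 ≤ (1 / Ω) * (((j : ℝ) + 1) * (β * (i : ℝ) + (j : ℝ) + α * (k : ℝ))
      * p i (j + 1) k) := by positivity
  have n6 : 0 ≤ (1 / Ω) * (((k : ℝ) + 1) * (α * (i : ℝ) + β * (j : ℝ) + (k : ℝ))
      * p i j (k + 1)) := by positivity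
  refine ⟨?_, ?_, ?_⟩
  · have z : d * (((i : ℝ) + 1) * p (i + 1) j k) = 0 := by linarith
    rcases mul_eq_zero.mp z with h' | h'
    · exact absurd h' (ne_of_gt hd)
    · rcases mul_eq_zero.mp h' with h'' | h''
      · exact absurd h'' (by positivity)
      · exact h''
  · have z : d * (((j : ℝ) + 1) * p i (j + 1) k) = 0 := by linarith
    rcases mul_eq_zero.mp z with h' | h'
    · exact absurd h' (ne_of_gt hd)
    · rcases mul_eq_zero.mp h' with h'' | h''
      · exact absurd h'' (by positivity)
      · exact h''
  · have z : d * (((k : ℝ) + 1) * p i j (k + 1)) = 0 := by linarith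
    rcases mul_eq_zero.mp z with h' | h'
    · exact absurd h' (ne_of_gt hd)
    · rcases mul_eq_zero.mp h' with h'' | h''
      · exact absurd h'' (by positivity)
      · exact h''

/-- Proposition 3.1: the unique stationary distribution of the GV model is total extinction. -/
theorem gv_stationary_iff_total_extinction
    (b d Ω α β : ℝ) (hb : 0 < b) (hd : 0 < d) (hΩ : 0 < Ω) (hα : 0 ≤ α) (hβ : 0 ≤ β)
    (p : ℕ → ℕ → ℕ → ℝ) (hnn : ∀ i j k : ℕ, 0 ≤ p i j k)
    (hsum : HasSum (fun n : ℕ × ℕ × ℕ => p n.1 n.2.1 n.2.2) 1) :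
    GVME b d Ω α β p ↔
      (p 0 0 0 = 1 ∧ ∀ i j k : ℕ, ¬(i = 0 ∧ j = 0 ∧ k = 0) → p i j k = 0) := by
  constructor
  · intro hME
    have key : ∀ n a b' c : ℕ, a + b' + c ≤ n → 1 ≤ a + b' + c → p a b' c = 0 := by
      intro n
      induction n with
      | zero => intro a b' c h1 h2; omega
      | succ n ih =>
        intro a b' c h1 h2
        rcases Nat.lt_or_ge (a + b' + c) (n + 1) with h3 | h3
        · exact ih a b' c (by omega) h2
        · have h4 : a + b' + c = n + 1 := by omega
          obtain ha | hb' | hc : 1 ≤ a ∨ 1 ≤ b' ∨ 1 ≤ c := by omega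
          · obtain ⟨a', rfl⟩ : ∃ a', a = a' + 1 := ⟨a - 1, by omega⟩
            exact (gv_step b d Ω α β hd hΩ hα hβ p hnn hME a' b' c
              (fun x y z hx hy => ih x y z (by omega) hx)).1
          · obtain ⟨b'', rfl⟩ : ∃ b'', b' = b'' + 1 := ⟨b' - 1, by omega⟩
            exact (gv_step b d Ω α β hd hΩ hα hβ p hnn hME a b'' c
              (fun x y z hx hy => ih x y z (by omega) hx)).2.1
          · obtain ⟨c', rfl⟩ : ∃ c', c = c' + 1 := ⟨c - 1, by omega⟩
            exact (gv_step b d Ω α β hd hΩ hα hβ p hnn hME a b' c'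
              (fun x y z hx hy => ih x y z (by omega) hx)).2.2
    refine ⟨?_, fun i j k hne => key (i + j + k) i j k le_rfl (by omega)⟩
    have h1 : HasSum (fun n : ℕ × ℕ × ℕ => p n.1 n.2.1 n.2.2) (p 0 0 0) := by
      apply hasSum_single ((0, 0, 0) : ℕ × ℕ × ℕ)
      intro x hx
      rcases x with ⟨x, y, z⟩
      have hx' : ¬ (x = 0 ∧ y = 0 ∧ z = 0) := by
        rintro ⟨rfl, rfl, rfl⟩; exact hx rfl
      exact key (x + y + z) x y z le_rfl (by omega)
    exact (hsum.unique h1).symm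
  · rintro ⟨h0, hz⟩ i j k
    have hz' : ∀ a b' c : ℕ, 1 ≤ a + b' + c → p a b' c = 0 := fun a b' c h =>
      hz a b' c (by omega)
    rw [bterm1 p i j k (fun h2 => hz' _ _ _ (by omega)),
        bterm2 p i j k (fun h2 => hz' _ _ _ (by omega)),
        bterm3 p i j k (fun h2 => hz' _ _ _ (by omega)),
        negterm1 b d p i j k (hz' i j k),
        negterm2 Ω α β p i j k (hz' i j k),
        pext_succ1, pext_succ2, pext_succ3,
        hz' (i + 1) j k (by omega), hz' i (j + 1) k (by omega), hz' i j (k + 1) (by omega)]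
    ring
end

section
/- Let b > 0, d > 0, Ω > 0 and α, β ≥ 0, and let p : ℕ³ → ℝ with p ≥ 0 satisfy the GV stationary master equation. If p(i,j,k) = 0 for some state (i,j,k), then p vanishes at every state (i',j',k') from which (i,j,k) can be reached by a single reaction with positive propensity; in particular, p(0,0,0) = 0 forces p(1,0,0) = p(0,1,0) = p(0,0,1) = 0. (Zero-mass propagation lemma underlying the uniqueness proof of Proposition 3.1.) -/
/-- `GVreact b d Ω α β s t` holds iff a single reaction of the GV model with positive
propensity takes state `s = (i',j',k')` to state `t = (i,j,k)`: a birth (propensity `b·i'`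
and cyclic analogues), an individual death (propensity `d·i'` and cyclic analogues), or a
competitive death (propensity `(1/Ω)·i'·(i'−1+αj'+βk')` and cyclic analogues). -/
noncomputable def GVreact (b d Ω α β : ℝ) (s t : ℕ × ℕ × ℕ) : Prop :=
  match s with
  | (i, j, k) =>
      (t = (i + 1, j, k) ∧ 0 < b * (i : ℝ)) ∨
      (t = (i, j + 1, k) ∧ 0 < b * (j : ℝ)) ∨
      (t = (i, j, k + 1) ∧ 0 < b * (k : ℝ)) ∨
      (1 ≤ i ∧ t = (i - 1, j, k) ∧ 0 < d * (i : ℝ)) ∨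
      (1 ≤ j ∧ t = (i, j - 1, k) ∧ 0 < d * (j : ℝ)) ∨
      (1 ≤ k ∧ t = (i, j, k - 1) ∧ 0 < d * (k : ℝ)) ∨
      (1 ≤ i ∧ t = (i - 1, j, k) ∧
        0 < (1 / Ω) * (i : ℝ) * ((i : ℝ) - 1 + α * (j : ℝ) + β * (k : ℝ))) ∨
      (1 ≤ j ∧ t = (i, j - 1, k) ∧
        0 < (1 / Ω) * (j : ℝ) * (β * (i : ℝ) + (j : ℝ) - 1 + α * (k : ℝ))) ∨
      (1 ≤ k ∧ t = (i, j, k - 1) ∧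
        0 < (1 / Ω) * (k : ℝ) * (α * (i : ℝ) + β * (j : ℝ) + (k : ℝ) - 1))

lemma pext_nonneg (p : ℕ → ℕ → ℕ → ℝ) (hnn : ∀ i j k : ℕ, 0 ≤ p i j k) (i j k : ℤ) :
    0 ≤ pext p i j k := by
  unfold pext; split
  · exact hnn _ _ _
  · exact le_rfl

lemma pext_natCast (p : ℕ → ℕ → ℕ → ℝ) (i j k : ℕ) : pext p i j k = p i j k := by
  simp [pext]

set_option maxHeartbeats 1000000 in
lemma gv_key (b d Ω α β : ℝ) (hb : 0 < b) (hd : 0 < d) (hΩ : 0 < Ω) (hα : 0 ≤ α) (hβ : 0 ≤ β)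
    (p : ℕ → ℕ → ℕ → ℝ) (hnn : ∀ i j k : ℕ, 0 ≤ p i j k)
    (hME : GVME b d Ω α β p) (i j k : ℕ) (h0 : p i j k = 0) :
    b * ((i : ℝ) - 1) * pext p ((i : ℤ) - 1) j k = 0 ∧
    b * ((j : ℝ) - 1) * pext p i ((j : ℤ) - 1) k = 0 ∧
    b * ((k : ℝ) - 1) * pext p i j ((k : ℤ) - 1) = 0 ∧
    d * ((i : ℝ) + 1) * pext p ((i : ℤ) + 1) j k = 0 ∧
    d * ((j : ℝ) + 1) * pext p i ((j : ℤ) + 1) k = 0 ∧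
    d * ((k : ℝ) + 1) * pext p i j ((k : ℤ) + 1) = 0 ∧
    (1 / Ω) * (((i : ℝ) + 1) * ((i : ℝ) + α * j + β * k)) * pext p ((i : ℤ) + 1) j k = 0 ∧
    (1 / Ω) * (((j : ℝ) + 1) * (β * i + (j : ℝ) + α * k)) * pext p i ((j : ℤ) + 1) k = 0 ∧
    (1 / Ω) * (((k : ℝ) + 1) * (α * i + β * j + (k : ℝ))) * pext p i j ((k : ℤ) + 1) = 0 := by
  have h := hME i j k
  have hp : pext p (i : ℤ) j k = 0 := by rw [pext_natCast]; exact h0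
  rw [hp] at h
  have hsum :
      b * ((i : ℝ) - 1) * pext p ((i : ℤ) - 1) j k
      + b * ((j : ℝ) - 1) * pext p i ((j : ℤ) - 1) k
      + b * ((k : ℝ) - 1) * pext p i j ((k : ℤ) - 1)
      + d * ((i : ℝ) + 1) * pext p ((i : ℤ) + 1) j k
      + d * ((j : ℝ) + 1) * pext p i ((j : ℤ) + 1) k
      + d * ((k : ℝ) + 1) * pext p i j ((k : ℤ) + 1)
      + (1 / Ω) * (((i : ℝ) + 1) * ((i : ℝ) + α * j + β * k)) * pext p ((i : ℤ) + 1) j k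
      + (1 / Ω) * (((j : ℝ) + 1) * (β * i + (j : ℝ) + α * k)) * pext p i ((j : ℤ) + 1) k
      + (1 / Ω) * (((k : ℝ) + 1) * (α * i + β * j + (k : ℝ))) * pext p i j ((k : ℤ) + 1) = 0 := by
    linear_combination h
  have e1 : 0 ≤ b * ((i : ℝ) - 1) * pext p ((i : ℤ) - 1) j k := by
    rcases Nat.eq_zero_or_pos i with hi | hi
    · subst hi; norm_num [pext]
    · have : (1 : ℝ) ≤ i := by exact_mod_cast hi
      exact mul_nonneg (mul_nonneg hb.le (by linarith)) (pext_nonneg p hnn _ _ _)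
  have e2 : 0 ≤ b * ((j : ℝ) - 1) * pext p i ((j : ℤ) - 1) k := by
    rcases Nat.eq_zero_or_pos j with hj | hj
    · subst hj; norm_num [pext]
    · have : (1 : ℝ) ≤ j := by exact_mod_cast hj
      exact mul_nonneg (mul_nonneg hb.le (by linarith)) (pext_nonneg p hnn _ _ _)
  have e3 : 0 ≤ b * ((k : ℝ) - 1) * pext p i j ((k : ℤ) - 1) := by
    rcases Nat.eq_zero_or_pos k with hk | hk
    · subst hk; norm_num [pext]
    · have : (1 : ℝ) ≤ k := by exact_mod_cast hk
      exact mul_nonneg (mul_nonneg hb.le (by linarith)) (pext_nonneg p hnn _ _ _)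
  have e4 : 0 ≤ d * ((i : ℝ) + 1) * pext p ((i : ℤ) + 1) j k :=
    mul_nonneg (mul_nonneg hd.le (by positivity)) (pext_nonneg p hnn _ _ _)
  have e5 : 0 ≤ d * ((j : ℝ) + 1) * pext p i ((j : ℤ) + 1) k :=
    mul_nonneg (mul_nonneg hd.le (by positivity)) (pext_nonneg p hnn _ _ _)
  have e6 : 0 ≤ d * ((k : ℝ) + 1) * pext p i j ((k : ℤ) + 1) :=
    mul_nonneg (mul_nonneg hd.le (by positivity)) (pext_nonneg p hnn _ _ _)
  have e7 : 0 ≤ (1 / Ω) * (((i : ℝ) + 1) * ((i : ℝ) + α * j + β * k)) * pext p ((i : ℤ) + 1) j k :=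
    mul_nonneg (by positivity) (pext_nonneg p hnn _ _ _)
  have e8 : 0 ≤ (1 / Ω) * (((j : ℝ) + 1) * (β * i + (j : ℝ) + α * k)) * pext p i ((j : ℤ) + 1) k :=
    mul_nonneg (by positivity) (pext_nonneg p hnn _ _ _)
  have e9 : 0 ≤ (1 / Ω) * (((k : ℝ) + 1) * (α * i + β * j + (k : ℝ))) * pext p i j ((k : ℤ) + 1) :=
    mul_nonneg (by positivity) (pext_nonneg p hnn _ _ _)
  exact ⟨by linarith, by linarith, by linarith, by linarith, by linarith, by linarith,
    by linarith, by linarith, by linarith⟩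

/-- Zero-mass propagation lemma underlying the uniqueness proof of Proposition 3.1:
if a stationary, nonnegative `p` vanishes at a state, it vanishes at every state from which
that state can be reached by a single reaction with positive propensity; in particular,
`p(0,0,0) = 0` forces `p(1,0,0) = p(0,1,0) = p(0,0,1) = 0`. -/
theorem gv_zero_mass_propagation
    (b d Ω α β : ℝ) (hb : 0 < b) (hd : 0 < d) (hΩ : 0 < Ω) (hα : 0 ≤ α) (hβ : 0 ≤ β)
    (p : ℕ → ℕ → ℕ → ℝ) (hnn : ∀ i j k : ℕ, 0 ≤ p i j k)
    (hME : GVME b d Ω α β p) :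
    (∀ t : ℕ × ℕ × ℕ, p t.1 t.2.1 t.2.2 = 0 →
      ∀ s : ℕ × ℕ × ℕ, GVreact b d Ω α β s t → p s.1 s.2.1 s.2.2 = 0) ∧
    (p 0 0 0 = 0 → p 1 0 0 = 0 ∧ p 0 1 0 = 0 ∧ p 0 0 1 = 0) := by
  have main : ∀ t : ℕ × ℕ × ℕ, p t.1 t.2.1 t.2.2 = 0 →
      ∀ s : ℕ × ℕ × ℕ, GVreact b d Ω α β s t → p s.1 s.2.1 s.2.2 = 0 := by
    rintro ⟨i, j, k⟩ h0 ⟨i', j', k'⟩ hr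
    simp only at h0 ⊢
    simp only [GVreact, Prod.mk.injEq] at hr
    rcases hr with ⟨⟨ht1, ht2, ht3⟩, hpos⟩ | ⟨⟨ht1, ht2, ht3⟩, hpos⟩ | ⟨⟨ht1, ht2, ht3⟩, hpos⟩ |
      ⟨h1, ⟨ht1, ht2, ht3⟩, hpos⟩ | ⟨h1, ⟨ht1, ht2, ht3⟩, hpos⟩ | ⟨h1, ⟨ht1, ht2, ht3⟩, hpos⟩ |
      ⟨h1, ⟨ht1, ht2, ht3⟩, hpos⟩ | ⟨h1, ⟨ht1, ht2, ht3⟩, hpos⟩ | ⟨h1, ⟨ht1, ht2, ht3⟩, hpos⟩ <;>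
      rw [ht1, ht2, ht3] at h0
    · have hk := (gv_key b d Ω α β hb hd hΩ hα hβ p hnn hME (i' + 1) j' k' h0).1
      rw [show (((i' + 1 : ℕ) : ℤ) - 1) = ((i' : ℕ) : ℤ) by push_cast; ring, pext_natCast] at hk
      push_cast at hk
      by_contra hne
      have hp2 : 0 < p i' j' k' := lt_of_le_of_ne (hnn _ _ _) (Ne.symm hne)
      nlinarith
    · have hk := (gv_key b d Ω α β hb hd hΩ hα hβ p hnn hME i' (j' + 1) k' h0).2.1
      rw [show (((j' + 1 : ℕ) : ℤ) - 1) = ((j' : ℕ) : ℤ) by push_cast; ring, pext_natCast] at hk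
      push_cast at hk
      by_contra hne
      have hp2 : 0 < p i' j' k' := lt_of_le_of_ne (hnn _ _ _) (Ne.symm hne)
      nlinarith
    · have hk := (gv_key b d Ω α β hb hd hΩ hα hβ p hnn hME i' j' (k' + 1) h0).2.2.1
      rw [show (((k' + 1 : ℕ) : ℤ) - 1) = ((k' : ℕ) : ℤ) by push_cast; ring, pext_natCast] at hk
      push_cast at hk
      by_contra hne
      have hp2 : 0 < p i' j' k' := lt_of_le_of_ne (hnn _ _ _) (Ne.symm hne)
      nlinarith
    · obtain ⟨n, rfl⟩ : ∃ n, i' = n + 1 := ⟨i' - 1, (Nat.succ_pred_eq_of_pos h1).symm⟩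
      simp only [Nat.add_sub_cancel] at h0
      have hk := (gv_key b d Ω α β hb hd hΩ hα hβ p hnn hME n j' k' h0).2.2.2.1
      rw [show ((n : ℤ) + 1) = ((n + 1 : ℕ) : ℤ) by push_cast; ring, pext_natCast] at hk
      push_cast at hpos
      by_contra hne
      have hp2 : 0 < p (n + 1) j' k' := lt_of_le_of_ne (hnn _ _ _) (Ne.symm hne)
      nlinarith
    · obtain ⟨n, rfl⟩ : ∃ n, j' = n + 1 := ⟨j' - 1, (Nat.succ_pred_eq_of_pos h1).symm⟩
      simp only [Nat.add_sub_cancel] at h0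
      have hk := (gv_key b d Ω α β hb hd hΩ hα hβ p hnn hME i' n k' h0).2.2.2.2.1
      rw [show ((n : ℤ) + 1) = ((n + 1 : ℕ) : ℤ) by push_cast; ring, pext_natCast] at hk
      push_cast at hpos
      by_contra hne
      have hp2 : 0 < p i' (n + 1) k' := lt_of_le_of_ne (hnn _ _ _) (Ne.symm hne)
      nlinarith
    · obtain ⟨n, rfl⟩ : ∃ n, k' = n + 1 := ⟨k' - 1, (Nat.succ_pred_eq_of_pos h1).symm⟩
      simp only [Nat.add_sub_cancel] at h0
      have hk := (gv_key b d Ω α β hb hd hΩ hα hβ p hnn hME i' j' n h0).2.2.2.2.2.1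
      rw [show ((n : ℤ) + 1) = ((n + 1 : ℕ) : ℤ) by push_cast; ring, pext_natCast] at hk
      push_cast at hpos
      by_contra hne
      have hp2 : 0 < p i' j' (n + 1) := lt_of_le_of_ne (hnn _ _ _) (Ne.symm hne)
      nlinarith
    · obtain ⟨n, rfl⟩ : ∃ n, i' = n + 1 := ⟨i' - 1, (Nat.succ_pred_eq_of_pos h1).symm⟩
      simp only [Nat.add_sub_cancel] at h0
      have hk := (gv_key b d Ω α β hb hd hΩ hα hβ p hnn hME n j' k' h0).2.2.2.2.2.2.1
      rw [show ((n : ℤ) + 1) = ((n + 1 : ℕ) : ℤ) by push_cast; ring, pext_natCast] at hk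
      push_cast at hpos
      by_contra hne
      have hp2 : 0 < p (n + 1) j' k' := lt_of_le_of_ne (hnn _ _ _) (Ne.symm hne)
      nlinarith
    · obtain ⟨n, rfl⟩ : ∃ n, j' = n + 1 := ⟨j' - 1, (Nat.succ_pred_eq_of_pos h1).symm⟩
      simp only [Nat.add_sub_cancel] at h0
      have hk := (gv_key b d Ω α β hb hd hΩ hα hβ p hnn hME i' n k' h0).2.2.2.2.2.2.2.1
      rw [show ((n : ℤ) + 1) = ((n + 1 : ℕ) : ℤ) by push_cast; ring, pext_natCast] at hk
      push_cast at hpos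
      by_contra hne
      have hp2 : 0 < p i' (n + 1) k' := lt_of_le_of_ne (hnn _ _ _) (Ne.symm hne)
      nlinarith
    · obtain ⟨n, rfl⟩ : ∃ n, k' = n + 1 := ⟨k' - 1, (Nat.succ_pred_eq_of_pos h1).symm⟩
      simp only [Nat.add_sub_cancel] at h0
      have hk := (gv_key b d Ω α β hb hd hΩ hα hβ p hnn hME i' j' n h0).2.2.2.2.2.2.2.2
      rw [show ((n : ℤ) + 1) = ((n + 1 : ℕ) : ℤ) by push_cast; ring, pext_natCast] at hk
      push_cast at hpos
      by_contra hne
      have hp2 : 0 < p i' j' (n + 1) := lt_of_le_of_ne (hnn _ _ _) (Ne.symm hne)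
      nlinarith
  refine ⟨main, fun h0 => ?_⟩
  have h1 := main (0, 0, 0) h0
  refine ⟨h1 (1, 0, 0) ?_, h1 (0, 1, 0) ?_, h1 (0, 0, 1) ?_⟩
  · exact Or.inr (Or.inr (Or.inr (Or.inl ⟨le_rfl, rfl, by simpa using hd⟩)))
  · exact Or.inr (Or.inr (Or.inr (Or.inr (Or.inl ⟨le_rfl, rfl, by simpa using hd⟩))))
  · exact Or.inr (Or.inr (Or.inr (Or.inr (Or.inr (Or.inl ⟨le_rfl, rfl, by simpa using hd⟩)))))
end

section
/- Let Ω > 0 and α, β ≥ 0, and set r = 1. Define p : ℕ³ → ℝ by p(n,0,0) = Ω^n/(n!·(e^Ω−1)) for integers n ≥ 1 and p(i,j,k) = 0 for all other states. Then p ≥ 0, ∑_{(i,j,k)∈ℕ³} p(i,j,k) = 1, and p satisfies the minimal-model stationary master equation. (The sole-survivor truncated Poisson distribution is stationary for the minimal model.) -/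
/-- The stationary master equation of the minimal stochastic May–Leonard model
(parameters `r`, `Ω`, `α`, `β`). -/
noncomputable def MinME (r Ω α β : ℝ) (p : ℕ → ℕ → ℕ → ℝ) : Prop :=
  ∀ i j k : ℕ,
    r * (((i : ℝ) - 1) * pext p ((i : ℤ) - 1) j k
        + ((j : ℝ) - 1) * pext p i ((j : ℤ) - 1) k
        + ((k : ℝ) - 1) * pext p i j ((k : ℤ) - 1))
    + (1 / Ω) * (((i : ℝ) + 1) * ((i : ℝ) + α * (j : ℝ) + β * (k : ℝ)) * pext p ((i : ℤ) + 1) j k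
        + ((j : ℝ) + 1) * (β * (i : ℝ) + (j : ℝ) + α * (k : ℝ)) * pext p i ((j : ℤ) + 1) k
        + ((k : ℝ) + 1) * (α * (i : ℝ) + β * (j : ℝ) + (k : ℝ)) * pext p i j ((k : ℤ) + 1))
    - r * ((i : ℝ) + (j : ℝ) + (k : ℝ)) * pext p i j k
    - (1 / Ω) * ((i : ℝ) * ((i : ℝ) - 1 + α * (j : ℝ) + β * (k : ℝ))
        + (j : ℝ) * (β * (i : ℝ) + (j : ℝ) - 1 + α * (k : ℝ))
        + (k : ℝ) * (α * (i : ℝ) + β * (j : ℝ) + (k : ℝ) - 1)) * pext p i j k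
    = 0

open Real Nat

def onAxis (q : ℕ → ℝ) (i j k : ℕ) : ℝ :=
  if j = 0 ∧ k = 0 then q i else 0

noncomputable def truncPoisson (Ω : ℝ) (n : ℕ) : ℝ :=
  if 1 ≤ n then Ω ^ n / (n ! * (exp Ω - 1)) else 0

@[simp]
lemma pext_neg_one_left (p : ℕ → ℕ → ℕ → ℝ) (b c : ℤ) : pext p (-1) b c = 0 := by
  simp [pext]

lemma pext_onAxis_eq_zero (q : ℕ → ℝ) {a b c : ℤ} (h : b ≠ 0 ∨ c ≠ 0) :
    pext (onAxis q) a b c = 0 := by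
  unfold pext onAxis
  split_ifs <;> first | rfl | omega

lemma pext_onAxis_axis (q : ℕ → ℝ) (i : ℕ) : pext (onAxis q) i 0 0 = q i := by
  simp [pext, onAxis]

section Axis

variable (q : ℕ → ℝ)

lemma onAxis_nonneg (hq : ∀ n, 0 ≤ q n) (i j k : ℕ) : 0 ≤ onAxis q i j k := by
  unfold onAxis
  split_ifs
  exacts [hq i, le_rfl]

lemma hasSum_onAxis {s : ℝ} (hq : HasSum q s) :
    HasSum (fun n : ℕ × ℕ × ℕ => onAxis q n.1 n.2.1 n.2.2) s := by
  have hinj : Function.Injective (fun n : ℕ => ((n, 0, 0) : ℕ × ℕ × ℕ)) :=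
    fun a b hab => by simpa using hab
  refine (hinj.hasSum_iff ?_).1 (by simpa [Function.comp_def, onAxis] using hq)
  rintro ⟨i, j, k⟩ hn
  have hjk : ¬(j = 0 ∧ k = 0) := by
    rintro ⟨rfl, rfl⟩
    exact hn ⟨i, rfl⟩
  simp [onAxis, hjk]

/-- The master equation of `onAxis q` at `(i, 0, 0)`, stripped of the `j`- and `k`-transitions. -/
lemma axis_balance (r Ω : ℝ) (hΩ : Ω ≠ 0)
    (hq : ∀ n : ℕ, 0 < n → ((n : ℝ) + 1) * q (n + 1) = r * Ω * q n) (i : ℕ) :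
    r * (((i : ℝ) - 1) * pext (onAxis q) ((i : ℤ) - 1) 0 0)
      + (1 / Ω) * (((i : ℝ) + 1) * (i : ℝ) * pext (onAxis q) ((i : ℤ) + 1) 0 0)
      - r * (i : ℝ) * pext (onAxis q) i 0 0
      - (1 / Ω) * ((i : ℝ) * ((i : ℝ) - 1)) * pext (onAxis q) i 0 0 = 0 := by
  rcases i with _ | m
  · simp
  have hcast : ((m + 1 : ℕ) : ℤ) - 1 = m := by push_cast; ring
  have hsucc : ((m + 1 : ℕ) : ℤ) + 1 = ((m + 2 : ℕ) : ℤ) := by push_cast; ring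
  rw [hcast, hsucc, pext_onAxis_axis, pext_onAxis_axis, pext_onAxis_axis]
  have hdeath : ((m : ℝ) + 2) * q (m + 2) = r * Ω * q (m + 1) := by
    exact_mod_cast hq (m + 1) m.succ_pos
  have hbirth : (m : ℝ) * (((m : ℝ) + 1) * q (m + 1)) = m * (r * Ω * q m) := by
    rcases m.eq_zero_or_pos with rfl | hm
    · simp
    · rw [hq m hm]
  push_cast
  field_simp
  linear_combination (m + 1) * hdeath - hbirth

theorem minME_onAxis (r Ω α β : ℝ) (hΩ : Ω ≠ 0)
    (hq : ∀ n : ℕ, 0 < n → ((n : ℝ) + 1) * q (n + 1) = r * Ω * q n) :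
    MinME r Ω α β (onAxis q) := by
  intro i j k
  have hj_succ : pext (onAxis q) i ((j : ℤ) + 1) k = 0 := pext_onAxis_eq_zero q (by omega)
  have hk_succ : pext (onAxis q) i j ((k : ℤ) + 1) = 0 := pext_onAxis_eq_zero q (by omega)
  -- at `j = 1` the zero comes from the coefficient, otherwise from the support
  have hj_pred : ((j : ℝ) - 1) * pext (onAxis q) i ((j : ℤ) - 1) k = 0 := by
    rcases eq_or_ne j 1 with rfl | hj
    · simp
    · rw [pext_onAxis_eq_zero q (by omega), mul_zero]
  have hk_pred : ((k : ℝ) - 1) * pext (onAxis q) i j ((k : ℤ) - 1) = 0 := by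
    rcases eq_or_ne k 1 with rfl | hk
    · simp
    · rw [pext_onAxis_eq_zero q (by omega), mul_zero]
  rw [hj_succ, hk_succ, hj_pred, hk_pred]
  by_cases hjk : j = 0 ∧ k = 0
  · obtain ⟨rfl, rfl⟩ := hjk
    simpa using axis_balance q r Ω hΩ hq i
  · have hoff : ∀ a : ℤ, pext (onAxis q) a j k = 0 :=
      fun a => pext_onAxis_eq_zero q (by omega)
    simp [hoff]

end Axis

section TruncPoisson

variable {Ω : ℝ}

lemma exp_sub_one_pos (hΩ : 0 < Ω) : 0 < exp Ω - 1 := by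
  linarith [add_one_lt_exp hΩ.ne']

lemma truncPoisson_nonneg (hΩ : 0 < Ω) (n : ℕ) : 0 ≤ truncPoisson Ω n := by
  have := exp_sub_one_pos hΩ
  unfold truncPoisson
  split_ifs <;> positivity

lemma hasSum_truncPoisson (hΩ : Ω ≠ 0) : HasSum (truncPoisson Ω) 1 := by
  have hexp : HasSum (fun n : ℕ => Ω ^ n / n !) (exp Ω) := by
    rw [exp_eq_exp_ℝ]
    exact NormedSpace.expSeries_div_hasSum_exp Ω
  have hne : exp Ω - 1 ≠ 0 := sub_ne_zero.2 fun h => hΩ ((exp_eq_one_iff Ω).1 h)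
  have htrunc :
      truncPoisson Ω = fun n => (Ω ^ n / (n ! : ℝ) - if n = 0 then 1 else 0) / (exp Ω - 1) := by
    funext n
    rcases n.eq_zero_or_pos with rfl | hn
    · simp [truncPoisson]
    · simp [truncPoisson, hn.ne', Nat.one_le_iff_ne_zero, div_div]
  have h := (hexp.sub (hasSum_ite_eq 0 1)).div_const (exp Ω - 1)
  rwa [div_self hne, ← htrunc] at h

lemma truncPoisson_detailed_balance {n : ℕ} (hn : 0 < n) :
    ((n : ℝ) + 1) * truncPoisson Ω (n + 1) = Ω * truncPoisson Ω n := by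
  have hfact : (n ! : ℝ) ≠ 0 := by positivity
  rw [truncPoisson, truncPoisson, if_pos (by omega), if_pos (show 1 ≤ n from hn), factorial_succ,
    pow_succ]
  push_cast
  field_simp

end TruncPoisson

theorem minimal_truncated_poisson_stationary_general
    (Ω α β : ℝ) (hΩ : 0 < Ω)
    (p : ℕ → ℕ → ℕ → ℝ)
    (hp : ∀ i j k : ℕ,
      p i j k = if 1 ≤ i ∧ j = 0 ∧ k = 0 then
        Ω ^ i / ((Nat.factorial i : ℝ) * (Real.exp Ω - 1)) else 0) :
    (∀ i j k : ℕ, 0 ≤ p i j k) ∧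
    HasSum (fun n : ℕ × ℕ × ℕ => p n.1 n.2.1 n.2.2) 1 ∧
    MinME 1 Ω α β p := by
  obtain rfl : p = onAxis (truncPoisson Ω) := by
    ext i j k
    rw [hp, onAxis, truncPoisson]
    split_ifs <;> tauto
  exact ⟨onAxis_nonneg _ (truncPoisson_nonneg hΩ), hasSum_onAxis _ (hasSum_truncPoisson hΩ.ne'),
    minME_onAxis _ 1 Ω α β hΩ.ne' fun _ hn => by
      rw [one_mul]; exact truncPoisson_detailed_balance hn⟩

/-- The sole-survivor truncated Poisson distribution is stationary for the minimal
model with `r = 1`. -/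
theorem minimal_truncated_poisson_stationary
    (Ω α β : ℝ) (hΩ : 0 < Ω) (hα : 0 ≤ α) (hβ : 0 ≤ β)
    (p : ℕ → ℕ → ℕ → ℝ)
    (hp : ∀ i j k : ℕ,
      p i j k = if 1 ≤ i ∧ j = 0 ∧ k = 0 then
        Ω ^ i / ((Nat.factorial i : ℝ) * (Real.exp Ω - 1)) else 0) :
    (∀ i j k : ℕ, 0 ≤ p i j k) ∧
    HasSum (fun n : ℕ × ℕ × ℕ => p n.1 n.2.1 n.2.2) 1 ∧
    MinME 1 Ω α β p :=
  minimal_truncated_poisson_stationary_general Ω α β hΩ p hp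
end

section
/- Let Ω > 0 and α, β ≥ 0, and set r = 1. Suppose p : ℕ³ → ℝ with p ≥ 0 and ∑_{(i,j,k)∈ℕ³} p(i,j,k) = 1 satisfies the minimal-model stationary master equation, p(0,0,0) = 0, and p(i,j,k) = 0 whenever (j,k) ≠ (0,0). Then p(n,0,0) = Ω^n/(n!·(e^Ω−1)) for all integers n ≥ 1. (Uniqueness of the truncated Poisson stationary distribution on each sole-survivor axis.) -/
lemma pext_of_neg_middle (p : ℕ → ℕ → ℕ → ℝ) (i : ℤ) {j : ℤ} (hj : j < 0) (k : ℤ) :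
    pext p i j k = 0 := by
  simp [pext, hj.not_ge]

lemma pext_of_neg_right (p : ℕ → ℕ → ℕ → ℝ) (i j : ℤ) {k : ℤ} (hk : k < 0) :
    pext p i j k = 0 := by
  simp [pext, hk.not_ge]

namespace MinME

variable {r Ω α β : ℝ} {p : ℕ → ℕ → ℕ → ℝ}

lemma axis_balance (hME : MinME r Ω α β p) (haxis : ∀ i j k : ℕ, ¬(j = 0 ∧ k = 0) → p i j k = 0)
    (n : ℕ) :
    r * (n * p n 0 0) + (1 / Ω) * ((n + 2) * (n + 1) * p (n + 2) 0 0)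
      - r * (n + 1) * p (n + 1) 0 0 - (1 / Ω) * ((n + 1) * n * p (n + 1) 0 0) = 0 := by
  have h := hME (n + 1) 0 0
  have hpred : ((n + 1 : ℕ) : ℤ) - 1 = (n : ℕ) := by push_cast; ring
  have hsucc : ((n + 1 : ℕ) : ℤ) + 1 = (n + 2 : ℕ) := by push_cast; ring
  have hneg : ((0 : ℕ) : ℤ) - 1 < 0 := by norm_num
  have hone : ((0 : ℕ) : ℤ) + 1 = (1 : ℕ) := rfl
  rw [hpred, hsucc, hone, pext_of_neg_middle p _ hneg, pext_of_neg_right p _ _ hneg] at h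
  simp only [pext_natCast, haxis _ 1 0 (by simp), haxis _ 0 1 (by simp)] at h
  push_cast at h
  linear_combination h

lemma axis_flux_eq_zero (hΩ : Ω ≠ 0) (hME : MinME r Ω α β p)
    (haxis : ∀ i j k : ℕ, ¬(j = 0 ∧ k = 0) → p i j k = 0) (n : ℕ) :
    r * Ω * (n * p n 0 0) = (n + 1) * n * p (n + 1) 0 0 := by
  induction n with
  | zero => simp
  | succ n ih =>
    have h := hME.axis_balance haxis n
    field_simp at h
    push_cast
    linear_combination ih - h

lemma axis_recurrence (hΩ : Ω ≠ 0) (hME : MinME r Ω α β p)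
    (haxis : ∀ i j k : ℕ, ¬(j = 0 ∧ k = 0) → p i j k = 0) (n : ℕ) (hn : 1 ≤ n) :
    (n + 1) * p (n + 1) 0 0 = r * Ω * p n 0 0 := by
  have hn' : (n : ℝ) ≠ 0 := by positivity
  apply mul_left_cancel₀ hn'
  linear_combination -hME.axis_flux_eq_zero hΩ haxis n

end MinME

lemma hasSum_axis_of_support {p : ℕ → ℕ → ℕ → ℝ} {s : ℝ}
    (haxis : ∀ i j k : ℕ, ¬(j = 0 ∧ k = 0) → p i j k = 0)
    (hsum : HasSum (fun n : ℕ × ℕ × ℕ => p n.1 n.2.1 n.2.2) s) :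
    HasSum (fun n => p n 0 0) s := by
  have hinj : Function.Injective (fun n : ℕ => ((n, 0, 0) : ℕ × ℕ × ℕ)) := by
    intro a b hab
    simpa using hab
  refine (hinj.hasSum_iff ?_).mpr hsum
  rintro ⟨i, j, k⟩ hx
  refine haxis i j k ?_
  rintro ⟨rfl, rfl⟩
  exact hx ⟨i, rfl⟩

section TruncatedPoisson

open Nat

variable {q : ℕ → ℝ} {t : ℝ}

lemma mul_factorial_eq_of_recurrence (hrec : ∀ n, 1 ≤ n → (n + 1) * q (n + 1) = t * q n)
    (n : ℕ) : q (n + 1) * (n + 1)! = q 1 * t ^ n := by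
  induction n with
  | zero => simp
  | succ n ih =>
    have h := hrec (n + 1) (by omega)
    rw [factorial_succ]
    push_cast at h ⊢
    linear_combination ((n + 1)! : ℝ) * h + t * ih

lemma eq_truncatedPoisson_of_recurrence (ht : t ≠ 0)
    (hrec : ∀ n, 1 ≤ n → (n + 1) * q (n + 1) = t * q n) (h0 : q 0 = 0) (hsum : HasSum q 1)
    (n : ℕ) (hn : 1 ≤ n) : q n = t ^ n / (n ! * (Real.exp t - 1)) := by
  have hform : ∀ k, 1 ≤ k → q k = q 1 / t * (t ^ k / k !) := by
    intro k hk
    obtain ⟨m, rfl⟩ : ∃ m, k = m + 1 := ⟨k - 1, by omega⟩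
    have hfac : ((m + 1)! : ℝ) ≠ 0 := by positivity
    field_simp
    linear_combination t * mul_factorial_eq_of_recurrence hrec m
  have hq : q = Function.update (fun n => q 1 / t * (t ^ n / n !)) 0 0 := by
    funext k
    rcases Nat.eq_zero_or_pos k with rfl | hk
    · simpa using h0
    · rw [Function.update_of_ne hk.ne', hform k hk]
  have hexp : HasSum q (q 1 / t * Real.exp t - q 1 / t) := by
    have hseries : HasSum (fun n => q 1 / t * (t ^ n / n !)) (q 1 / t * Real.exp t) := by
      rw [Real.exp_eq_exp_ℝ]
      exact (NormedSpace.expSeries_div_hasSum_exp t).mul_left (q 1 / t)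
    simpa [← hq, sub_eq_neg_add] using hseries.update 0 0
  have hc : q 1 / t * (Real.exp t - 1) = 1 := by linear_combination hexp.unique hsum
  have hexp1 : Real.exp t - 1 ≠ 0 := sub_ne_zero.mpr ((Real.exp_eq_one_iff t).not.mpr ht)
  have hfac : (n ! : ℝ) ≠ 0 := by positivity
  rw [hform n hn, eq_div_iff (mul_ne_zero hfac hexp1)]
  calc _ = t ^ n * (q 1 / t * (Real.exp t - 1)) * ((n ! : ℝ) / n !) := by ring
    _ = t ^ n := by rw [hc, div_self hfac, mul_one, mul_one]

end TruncatedPoisson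

theorem minimal_axis_stationary_unique_general
    (Ω α β : ℝ) (hΩ : 0 < Ω)
    (p : ℕ → ℕ → ℕ → ℝ)
    (hsum : HasSum (fun n : ℕ × ℕ × ℕ => p n.1 n.2.1 n.2.2) 1)
    (hME : MinME 1 Ω α β p)
    (h0 : p 0 0 0 = 0)
    (haxis : ∀ i j k : ℕ, ¬(j = 0 ∧ k = 0) → p i j k = 0) :
    ∀ n : ℕ, 1 ≤ n → p n 0 0 = Ω ^ n / ((Nat.factorial n : ℝ) * (Real.exp Ω - 1)) := by
  have hrec := hME.axis_recurrence hΩ.ne' haxis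
  simp only [one_mul] at hrec
  exact eq_truncatedPoisson_of_recurrence hΩ.ne' hrec h0 (hasSum_axis_of_support haxis hsum)

/-- Uniqueness of the truncated Poisson stationary distribution on a sole-survivor axis:
if a stationary distribution of the minimal model (with `r = 1`) is supported on the
first axis with no mass at the origin, it is the truncated Poisson distribution. -/
theorem minimal_axis_stationary_unique
    (Ω α β : ℝ) (hΩ : 0 < Ω) (hα : 0 ≤ α) (hβ : 0 ≤ β)
    (p : ℕ → ℕ → ℕ → ℝ) (hnn : ∀ i j k : ℕ, 0 ≤ p i j k)
    (hsum : HasSum (fun n : ℕ × ℕ × ℕ => p n.1 n.2.1 n.2.2) 1)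
    (hME : MinME 1 Ω α β p)
    (h0 : p 0 0 0 = 0)
    (haxis : ∀ i j k : ℕ, ¬(j = 0 ∧ k = 0) → p i j k = 0) :
    ∀ n : ℕ, 1 ≤ n → p n 0 0 = Ω ^ n / ((Nat.factorial n : ℝ) * (Real.exp Ω - 1)) :=
  minimal_axis_stationary_unique_general Ω α β hΩ p hsum hME h0 haxis
end

section
/- Let Ω > 0 and define π : ℕ → ℝ by π(0) = 0 and π(n) = Ω^n/(n!·(e^Ω−1)) for n ≥ 1. Then π is nonnegative, ∑_{n=0}^∞ π(n) = 1, and π satisfies the detailed-balance relation n·π(n) = ((n+1)n/Ω)·π(n+1) for every integer n ≥ 0; consequently π satisfies the one-dimensional stationary master equation (n−1)·π(n−1) + ((n+1)n/Ω)·π(n+1) = (n + n(n−1)/Ω)·π(n) for all n ≥ 1 (with π(−1) := 0). (Truncated-Poisson stationarity of the single-species birth–death chain N ⇌ 2N with per-capita birth rate 1 and homocidal death propensity n(n−1)/Ω.) -/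
/-! The weights `Ωⁿ/n!` sum to `e^Ω`, so dropping the `n = 0` term and dividing by `e^Ω - 1`
gives a probability distribution. Its consecutive ratios are `π(n+1)/π(n) = Ω/(n+1)`, which is
exactly the ratio of the birth propensity `n` to the death propensity `(n+1)n/Ω`; detailed balance
across every edge `n ↔ n+1` then makes the probability flux into each state equal to the flux out. -/

open Nat

noncomputable def truncatedPoisson (Ω : ℝ) (n : ℕ) : ℝ :=
  if n = 0 then 0 else Ω ^ n / (n ! * (Real.exp Ω - 1))

namespace truncatedPoisson

variable {Ω : ℝ}

theorem nonneg (hΩ : 0 ≤ Ω) (n : ℕ) : 0 ≤ truncatedPoisson Ω n := by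
  have hE : 0 ≤ Real.exp Ω - 1 := by linarith [Real.add_one_le_exp Ω]
  unfold truncatedPoisson
  split_ifs <;> positivity

theorem eq_update (Ω : ℝ) :
    truncatedPoisson Ω = Function.update (fun n ↦ Ω ^ n / n ! / (Real.exp Ω - 1)) 0 0 := by
  funext n
  rcases eq_or_ne n 0 with rfl | hn
  · simp [truncatedPoisson]
  · simp [truncatedPoisson, hn, div_div]

theorem hasSum (hΩ : Ω ≠ 0) : HasSum (truncatedPoisson Ω) 1 := by
  have hE : Real.exp Ω - 1 ≠ 0 := sub_ne_zero.2 (mt (Real.exp_eq_one_iff Ω).1 hΩ)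
  have hexp : HasSum (fun n ↦ Ω ^ n / n ! / (Real.exp Ω - 1)) (Real.exp Ω / (Real.exp Ω - 1)) := by
    rw [Real.exp_eq_exp_ℝ]
    exact (NormedSpace.expSeries_div_hasSum_exp Ω).div_const _
  have htotal : 0 - Ω ^ 0 / (0 ! : ℕ) / (Real.exp Ω - 1) + Real.exp Ω / (Real.exp Ω - 1) = 1 := by
    field_simp
    ring
  have hupdate := hexp.update 0 0
  rwa [htotal, ← eq_update Ω] at hupdate

theorem detailed_balance (hΩ : Ω ≠ 0) (n : ℕ) :
    (n : ℝ) * truncatedPoisson Ω n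
      = ((n + 1) * n / Ω) * truncatedPoisson Ω (n + 1) := by
  rcases n with _ | n
  · simp [truncatedPoisson]
  · simp only [truncatedPoisson, succ_ne_zero, if_false, factorial_succ]
    push_cast
    field_simp
    ring

end truncatedPoisson

theorem master_equation_of_detailed_balance {b d p : ℕ → ℝ}
    (h : ∀ n, b n * p n = d (n + 1) * p (n + 1)) {n : ℕ} (hn : 1 ≤ n) :
    b (n - 1) * p (n - 1) + d (n + 1) * p (n + 1) = (b n + d n) * p n := by
  have hin := h (n - 1)
  rw [Nat.sub_add_cancel hn] at hin
  linear_combination hin - h n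

/-- Truncated-Poisson stationarity of the single-species birth–death chain `N ⇌ 2N`
with per-capita birth rate `1` and homocidal death propensity `n(n−1)/Ω`. -/
theorem truncated_poisson_detailed_balance
    (Ω : ℝ) (hΩ : 0 < Ω) (π : ℕ → ℝ)
    (hπ0 : π 0 = 0)
    (hπ : ∀ n : ℕ, 1 ≤ n → π n = Ω ^ n / ((Nat.factorial n : ℝ) * (Real.exp Ω - 1))) :
    (∀ n : ℕ, 0 ≤ π n) ∧
    HasSum π 1 ∧
    (∀ n : ℕ, (n : ℝ) * π n = (((n : ℝ) + 1) * (n : ℝ) / Ω) * π (n + 1)) ∧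
    (∀ n : ℕ, 1 ≤ n →
      ((n : ℝ) - 1) * π (n - 1) + (((n : ℝ) + 1) * (n : ℝ) / Ω) * π (n + 1)
        = ((n : ℝ) + (n : ℝ) * ((n : ℝ) - 1) / Ω) * π n) := by
  obtain rfl : π = truncatedPoisson Ω := by
    funext n
    rcases eq_or_ne n 0 with rfl | hn
    · simp [hπ0, truncatedPoisson]
    · simp [hπ n (Nat.one_le_iff_ne_zero.2 hn), truncatedPoisson, hn]
  have hdb := truncatedPoisson.detailed_balance hΩ.ne'
  refine ⟨truncatedPoisson.nonneg hΩ.le, truncatedPoisson.hasSum hΩ.ne', hdb, fun n hn ↦ ?_⟩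
  have hmaster := master_equation_of_detailed_balance (b := fun n ↦ (n : ℝ))
    (d := fun n ↦ (n : ℝ) * (n - 1) / Ω) (fun n ↦ by simpa using hdb n) hn
  simpa [Nat.cast_sub hn] using hmaster
end

section
/- Let R be the directed relation on ℤ³ (the set of complexes of the minimal-model reaction network) generated by the following twelve reaction edges, for each m ∈ {1,2,3} with indices cyclic and eₘ the m-th standard basis vector: eₘ → 2eₘ, 2eₘ → eₘ, eₘ + e_{m+1} → e_{m+1}, and eₘ + e_{m+2} → e_{m+2}. Then there is no finite directed path under R (i.e. no chain in the reflexive–transitive closure of R) from the complex e₁ to the complex e₁ + e₂. (The minimal-model reaction network is not weakly reversible: the reaction N₁ + N₂ → N₁ cannot be undone by any sequence of reactions; this is the key step showing the network admits no complex-balanced equilibrium.) -/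
/-- The reaction-edge relation on the complexes (elements of `ℤ³`) of the minimal-model
reaction network: for each `m ∈ {1,2,3}` (indices cyclic, `eₘ` the `m`-th standard basis
vector) the edges `eₘ → 2eₘ`, `2eₘ → eₘ`, `eₘ + e_{m+1} → e_{m+1}`, and
`eₘ + e_{m+2} → e_{m+2}`. -/
def ReactionEdge : ℤ × ℤ × ℤ → ℤ × ℤ × ℤ → Prop :=
  fun s t =>
    (s = (1, 0, 0) ∧ t = (2, 0, 0)) ∨
    (s = (0, 1, 0) ∧ t = (0, 2, 0)) ∨
    (s = (0, 0, 1) ∧ t = (0, 0, 2)) ∨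
    (s = (2, 0, 0) ∧ t = (1, 0, 0)) ∨
    (s = (0, 2, 0) ∧ t = (0, 1, 0)) ∨
    (s = (0, 0, 2) ∧ t = (0, 0, 1)) ∨
    (s = (1, 1, 0) ∧ t = (0, 1, 0)) ∨
    (s = (0, 1, 1) ∧ t = (0, 0, 1)) ∨
    (s = (1, 0, 1) ∧ t = (1, 0, 0)) ∨
    (s = (1, 0, 1) ∧ t = (0, 0, 1)) ∨
    (s = (1, 1, 0) ∧ t = (1, 0, 0)) ∨
    (s = (0, 1, 1) ∧ t = (0, 1, 0))

lemma reach_inv {x : ℤ × ℤ × ℤ} (h : Relation.ReflTransGen ReactionEdge (1, 0, 0) x) :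
    x = (1, 0, 0) ∨ x = (2, 0, 0) := by
  induction h with
  | refl => left; rfl
  | tail _ e ih =>
    rcases ih with h | h <;> subst h <;>
      rcases e with ⟨h, rfl⟩|⟨h, rfl⟩|⟨h, rfl⟩|⟨h, rfl⟩|⟨h, rfl⟩|⟨h, rfl⟩|⟨h, rfl⟩|⟨h, rfl⟩|⟨h, rfl⟩|⟨h, rfl⟩|⟨h, rfl⟩|⟨h, rfl⟩ <;>
      simp_all [Prod.ext_iff]

/-- The minimal-model reaction network is not weakly reversible: there is no finite
directed path of reactions from the complex `e₁` to the complex `e₁ + e₂`. -/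
theorem minimal_network_not_weakly_reversible :
    ¬ Relation.ReflTransGen ReactionEdge (1, 0, 0) (1, 1, 0) := by
  intro h
  rcases reach_inv h with h | h <;> simp_all
end
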